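/- Let M be a jstit model for Ag, let m ∈ Tree, let h' ∈ H_m, and let t ∈ Pol with t ∉ Act(m, h'). Then for every m' ∈ h' with Next(m, m'), we have t ∉ Act_{m'}. -/

import Mathlib

/-! Preliminaries: temporal frames, stit frames, jstit frames, the language of
JA-STIT, jstit models, satisfaction, and the Hilbert system Σ_D(CS). -/

/-- A temporal frame: a nonempty set of moments with a partial order satisfying
historical connection and no backward branching. -/
structure TemporalFrame (Mo : Type) : Type where
  le : Mo → Mo → Prop
  le_refl : ∀ m, le m m
  le_antisymm : ∀ {m m'}, le m m' → le m' m → m = m'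
  le_trans : ∀ {m1 m2 m3}, le m1 m2 → le m2 m3 → le m1 m3
  nonempty : Nonempty Mo
  hist_conn : ∀ m m1, ∃ m2, le m2 m ∧ le m2 m1
  no_backward : ∀ m m1 m2, le m1 m → le m2 m → le m1 m2 ∨ le m2 m1

namespace TemporalFrame

variable {Mo : Type} (T : TemporalFrame Mo)

/-- The strict companion of the temporal order. -/
def lt (m m' : Mo) : Prop := T.le m m' ∧ m ≠ m'

/-- A history is a maximal chain of moments w.r.t. the temporal order. -/
def IsHistory (h : Set Mo) : Prop :=
  IsChain T.le h ∧ ∀ h' : Set Mo, IsChain T.le h' → h ⊆ h' → h' = h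

/-- `T.H m` is the set of histories passing through the moment `m`. -/
def H (m : Mo) : Set (Set Mo) := { h | T.IsHistory h ∧ m ∈ h }

/-- Histories `h` and `g` are undivided at `m`. -/
def Undiv (m : Mo) (h g : Set Mo) : Prop := ∃ m', T.lt m m' ∧ m' ∈ h ∧ m' ∈ g

/-- `m'` is an immediate successor of `m`. -/
def Next (m m' : Mo) : Prop := T.lt m m' ∧ ∀ m'', T.lt m'' m' → T.le m'' m

/-- Mixed successor condition on (the temporal part of) a frame. -/
def MixSucc : Prop :=
  ∀ m m1 : Mo,
    (T.lt m m1 → ∃ m2, T.le m2 m1 ∧ T.Next m m2) ∨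
    (∀ h ∈ T.H m, ∀ g ∈ T.H m, T.Undiv m h g)

end TemporalFrame

/-- A stit frame for an agent community `Ag`: a temporal frame together with a choice
function assigning to each moment and agent a partition of the histories through that
moment, subject to no choice between undivided histories and independence of agents. -/
structure StitFrame (Mo : Type) (Ag : Type) extends TemporalFrame Mo where
  choice : Mo → Ag → Set (Set (Set Mo))
  choice_cell_nonempty : ∀ m j C, C ∈ choice m j → C.Nonempty
  choice_cell_sub : ∀ m j C, C ∈ choice m j → C ⊆ toTemporalFrame.H m
  choice_cover : ∀ m j h, h ∈ toTemporalFrame.H m → ∃ C ∈ choice m j, h ∈ C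
  choice_disjoint : ∀ m j C C', C ∈ choice m j → C' ∈ choice m j →
    (C ∩ C').Nonempty → C = C'
  no_choice_undiv : ∀ m j h h', h ∈ toTemporalFrame.H m → h' ∈ toTemporalFrame.H m →
    toTemporalFrame.Undiv m h h' → ∀ C ∈ choice m j, h ∈ C → h' ∈ C
  independence : ∀ m (f : Ag → Set (Set Mo)), (∀ j, f j ∈ choice m j) →
    (⋂ j, f j).Nonempty

/-- A justification stit (jstit) frame for `Ag`: a stit frame together with two
epistemic preorders `R ⊆ R_e`, with the temporal order included in `R`. -/
structure JstitFrame (Mo : Type) (Ag : Type) extends StitFrame Mo Ag where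
  R : Mo → Mo → Prop
  Re : Mo → Mo → Prop
  R_refl : ∀ m, R m m
  R_trans : ∀ {m1 m2 m3}, R m1 m2 → R m2 m3 → R m1 m3
  Re_refl : ∀ m, Re m m
  Re_trans : ∀ {m1 m2 m3}, Re m1 m2 → Re m2 m3 → Re m1 m3
  R_sub_Re : ∀ {m m'}, R m m' → Re m m'
  le_sub_R : ∀ {m m'}, le m m' → R m m'

namespace JstitFrame

variable {Mo : Type} {Ag : Type} (F : JstitFrame Mo Ag)

/-- The family `Θ_m` of subsets of the set of moments associated with a moment `m`. -/
def Theta (m : Mo) : Set (Set Mo) :=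
  { S | m ∈ S ∧
    (∀ m1 m2, m1 ∈ S → F.Re m1 m2 → m2 ∈ S) ∧
    (∀ m1, (∀ h ∈ F.toTemporalFrame.H m1,
        ∃ m2 ∈ h, F.toTemporalFrame.Next m1 m2 ∧ m2 ∈ S) → m1 ∈ S) ∧
    (∀ m1, m1 ∈ S →
      (∀ m2, F.toTemporalFrame.lt m2 m1 →
        ∃ m3, F.toTemporalFrame.lt m2 m3 ∧ F.toTemporalFrame.lt m3 m1) →
      ∃ m4, F.toTemporalFrame.lt m4 m1 ∧ m4 ∈ S) }

/-- A jstit frame is unirelational iff `R_e ⊆ R`. -/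
def Unirelational : Prop := ∀ m m', F.Re m m' → F.R m m'

/-- Regularity of a jstit frame. -/
def Regular : Prop :=
  ∀ m m1 : Mo, F.toTemporalFrame.lt m m1 →
    (∃ S : Set Mo,
      (∀ m0, F.toTemporalFrame.lt m m0 → F.le m0 m1 → S ∈ F.Theta m0) ∧
      m ∉ S ∧
      ∃ h' ∈ F.toTemporalFrame.H m,
        (∀ g ∈ F.toTemporalFrame.H m1, ¬ F.toTemporalFrame.Undiv m h' g) ∧
        (∀ m' ∈ h', F.toTemporalFrame.Next m m' → m' ∉ S)) →
    ∃ m2, F.le m2 m1 ∧ F.toTemporalFrame.Next m m2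

end JstitFrame

/-- Proof polynomials over proof variables `PVar` and proof constants `PConst`. -/
inductive Pol (PVar PConst : Type) : Type
  | var : PVar → Pol PVar PConst
  | const : PConst → Pol PVar PConst
  | plus : Pol PVar PConst → Pol PVar PConst → Pol PVar PConst
  | times : Pol PVar PConst → Pol PVar PConst → Pol PVar PConst
  | bang : Pol PVar PConst → Pol PVar PConst

/-- Formulas of JA-STIT. -/
inductive Form (Ag PVar PConst PropVar : Type) : Type
  | pv : PropVar → Form Ag PVar PConst PropVar
  | and : Form Ag PVar PConst PropVar → Form Ag PVar PConst PropVar →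
      Form Ag PVar PConst PropVar
  | neg : Form Ag PVar PConst PropVar → Form Ag PVar PConst PropVar
  | stit : Ag → Form Ag PVar PConst PropVar → Form Ag PVar PConst PropVar
  | box : Form Ag PVar PConst PropVar → Form Ag PVar PConst PropVar
  | proves : Pol PVar PConst → Form Ag PVar PConst PropVar → Form Ag PVar PConst PropVar
  | know : Form Ag PVar PConst PropVar → Form Ag PVar PConst PropVar
  | ann : Pol PVar PConst → Form Ag PVar PConst PropVar

namespace Form

variable {Ag PVar PConst PropVar : Type}

/-- Implication, defined as usual from `¬` and `∧`. -/
def imp (A B : Form Ag PVar PConst PropVar) : Form Ag PVar PConst PropVar :=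
  neg (and A (neg B))

/-- Disjunction, defined as usual. -/
def or (A B : Form Ag PVar PConst PropVar) : Form Ag PVar PConst PropVar :=
  neg (and (neg A) (neg B))

/-- The dual `◇` of the historical necessity modality. -/
def dia (A : Form Ag PVar PConst PropVar) : Form Ag PVar PConst PropVar :=
  neg (box (neg A))

/-- Falsum, defined as usual. -/
def bot [Inhabited PropVar] : Form Ag PVar PConst PropVar :=
  and (pv default) (neg (pv default))

end Form

/-- Conjunction of a nonempty list of formulas (head plus tail). -/
def andList {Ag PVar PConst PropVar : Type} :
    Form Ag PVar PConst PropVar → List (Form Ag PVar PConst PropVar) →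
      Form Ag PVar PConst PropVar
  | A, [] => A
  | A, B :: L => Form.and A (andList B L)

/-- Disjunction of a list of formulas. -/
def bigOr {Ag PVar PConst PropVar : Type} [Inhabited PropVar] :
    List (Form Ag PVar PConst PropVar) → Form Ag PVar PConst PropVar
  | [] => Form.bot
  | [A] => A
  | A :: B :: L => Form.or A (bigOr (B :: L))

/-- A classical propositional tautology: a formula true under every Boolean valuation
commuting with `∧` and `¬` (all other formulas being treated as atoms). -/
def Tautology {Ag PVar PConst PropVar : Type} (A : Form Ag PVar PConst PropVar) : Prop :=
  ∀ v : Form Ag PVar PConst PropVar → Bool,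
    (∀ B C, v (Form.and B C) = (v B && v C)) →
    (∀ B, v (Form.neg B) = !v B) →
    v A = true

/-- The axiom schemes (A0)–(A9) of Σ_D. -/
inductive Ax {Ag PVar PConst PropVar : Type} : Form Ag PVar PConst PropVar → Prop
  -- (A0) classical propositional tautologies
  | a0 {A} : Tautology A → Ax A
  -- (A1) S5 axioms for □
  | boxK {A B} : Ax (Form.imp (Form.box (Form.imp A B))
      (Form.imp (Form.box A) (Form.box B)))
  | boxT {A} : Ax (Form.imp (Form.box A) A)
  | box4 {A} : Ax (Form.imp (Form.box A) (Form.box (Form.box A)))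
  | box5 {A} : Ax (Form.imp (Form.neg (Form.box A)) (Form.box (Form.neg (Form.box A))))
  -- (A1) S5 axioms for each [j]
  | stitK {j : Ag} {A B} : Ax (Form.imp (Form.stit j (Form.imp A B))
      (Form.imp (Form.stit j A) (Form.stit j B)))
  | stitT {j : Ag} {A} : Ax (Form.imp (Form.stit j A) A)
  | stit4 {j : Ag} {A} : Ax (Form.imp (Form.stit j A) (Form.stit j (Form.stit j A)))
  | stit5 {j : Ag} {A} : Ax (Form.imp (Form.neg (Form.stit j A))
      (Form.stit j (Form.neg (Form.stit j A))))
  -- (A2)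
  | a2 {j : Ag} {A} : Ax (Form.imp (Form.box A) (Form.stit j A))
  -- (A3), for pairwise distinct agents
  | a3 {p : Ag × Form Ag PVar PConst PropVar} {L : List (Ag × Form Ag PVar PConst PropVar)} :
      (((p :: L).map Prod.fst).Nodup) →
      Ax (Form.imp
        (andList (Form.dia (Form.stit p.1 p.2)) (L.map fun q => Form.dia (Form.stit q.1 q.2)))
        (Form.dia (andList (Form.stit p.1 p.2) (L.map fun q => Form.stit q.1 q.2))))
  -- (A4)
  | a4 {s t : Pol PVar PConst} {A B} : Ax (Form.imp (Form.proves s (Form.imp A B))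
      (Form.imp (Form.proves t A) (Form.proves (Pol.times s t) B)))
  -- (A5)
  | a5 {t : Pol PVar PConst} {A} : Ax (Form.imp (Form.proves t A)
      (Form.and (Form.proves (Pol.bang t) (Form.proves t A)) (Form.know A)))
  -- (A6)
  | a6 {s t : Pol PVar PConst} {A} : Ax (Form.imp
      (Form.or (Form.proves s A) (Form.proves t A)) (Form.proves (Pol.plus s t) A))
  -- (A7) S4 axioms for K
  | knowK {A B} : Ax (Form.imp (Form.know (Form.imp A B))
      (Form.imp (Form.know A) (Form.know B)))
  | knowT {A} : Ax (Form.imp (Form.know A) A)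
  | know4 {A} : Ax (Form.imp (Form.know A) (Form.know (Form.know A)))
  -- (A8)
  | a8 {A} : Ax (Form.imp (Form.know A) (Form.box (Form.know (Form.box A))))
  -- (A9)
  | a9 {t : Pol PVar PConst} : Ax (Form.imp (Form.box (Form.ann t))
      (Form.know (Form.box (Form.ann t))))

/-- Iterated prefixes `c_n : … : c_1 : A` of instances `A` of the axiom schemes. -/
inductive ConstIter {Ag PVar PConst PropVar : Type} : Form Ag PVar PConst PropVar → Prop
  | base {c : PConst} {A} : Ax A → ConstIter (Form.proves (Pol.const c) A)
  | step {c : PConst} {B} : ConstIter B → ConstIter (Form.proves (Pol.const c) B)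

/-- A constant specification: a set of formulas of the form `c_n : … : c_1 : A` with `A`
an instance of (A0)–(A9), closed under deleting the outermost constant. -/
def IsConstSpec {Ag PVar PConst PropVar : Type}
    (CS : Set (Form Ag PVar PConst PropVar)) : Prop :=
  (∀ B ∈ CS, ConstIter B) ∧
  ∀ (c c' : PConst) (B : Form Ag PVar PConst PropVar),
    Form.proves (Pol.const c) (Form.proves (Pol.const c') B) ∈ CS →
    Form.proves (Pol.const c') B ∈ CS

/-- Provability in Σ_D(CS): axioms (A0)–(A9), modus ponens (R1), K-necessitation (R2),
the rule (R_D) and the rule (R_CS). -/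
inductive Proves {Ag PVar PConst PropVar : Type} [Inhabited PropVar]
    (CS : Set (Form Ag PVar PConst PropVar)) : Form Ag PVar PConst PropVar → Prop
  | ax {A} : Ax A → Proves CS A
  | mp {A B} : Proves CS (Form.imp A B) → Proves CS A → Proves CS B
  | nec {A} : Proves CS A → Proves CS (Form.know A)
  | rd {A : Form Ag PVar PConst PropVar} {ts ss : List (Pol PVar PConst)}
      (hne : ts ++ ss ≠ []) :
      Proves CS (Form.imp (Form.know A)
        (bigOr ((ts.map fun t => Form.neg (Form.box (Form.ann t))) ++
                (ss.map fun s => Form.box (Form.ann s))))) →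
      Proves CS (Form.imp (Form.know A)
        (bigOr ((ts.map fun t => Form.neg (Form.ann t)) ++
                (ss.map fun s => Form.ann s))))
  | rcs {B} : B ∈ CS → Proves CS B

/-- Γ is consistent in Σ_D(CS): no finite nonempty conjunction of members of Γ provably
implies falsum. -/
def CSConsistent {Ag PVar PConst PropVar : Type} [Inhabited PropVar]
    (CS Γ : Set (Form Ag PVar PConst PropVar)) : Prop :=
  ¬ ∃ (A : Form Ag PVar PConst PropVar) (L : List (Form Ag PVar PConst PropVar)),
      A ∈ Γ ∧ (∀ B ∈ L, B ∈ Γ) ∧ Proves CS (Form.imp (andList A L) Form.bot)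

/-- A jstit model for `Ag`: a jstit frame together with `Act`, an admissible evidence
function `E` and an evaluation `V`, subject to the semantical constraints. -/
structure JstitModel (Mo : Type) (Ag PVar PConst PropVar : Type)
    extends JstitFrame Mo Ag where
  act : Mo → Set Mo → Set (Pol PVar PConst)
  ev : Mo → Pol PVar PConst → Set (Form Ag PVar PConst PropVar)
  val : PropVar → Set (Mo × Set Mo)
  -- monotonicity of evidence
  ev_mono : ∀ m m' t, Re m m' → ev m t ⊆ ev m' t
  -- evidence closure properties
  ev_app : ∀ m s t A B, Form.imp A B ∈ ev m s → A ∈ ev m t → B ∈ ev m (Pol.times s t)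
  ev_sum_left : ∀ m s t, ev m s ⊆ ev m (Pol.plus s t)
  ev_sum_right : ∀ m s t, ev m t ⊆ ev m (Pol.plus s t)
  ev_bang : ∀ m t A, A ∈ ev m t → Form.proves t A ∈ ev m (Pol.bang t)
  -- expansion of presented proofs
  expansion : ∀ m m' h, toTemporalFrame.lt m' m → h ∈ toTemporalFrame.H m →
    act m' h ⊆ act m h
  -- no new proofs guaranteed
  no_new : ∀ m t, (∀ h ∈ toTemporalFrame.H m, t ∈ act m h) →
    ∃ m' h, toTemporalFrame.lt m' m ∧ h ∈ toTemporalFrame.H m ∧ t ∈ act m' h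
  -- presenting a new proof makes histories divide
  divide : ∀ m h h', h ∈ toTemporalFrame.H m → h' ∈ toTemporalFrame.H m →
    toTemporalFrame.Undiv m h h' → act m h = act m h'
  -- presented proofs are epistemically transparent
  transparent : ∀ m m' t, Re m m' → (∀ h ∈ toTemporalFrame.H m, t ∈ act m h) →
    ∀ h' ∈ toTemporalFrame.H m', t ∈ act m' h'

namespace JstitModel

variable {Mo Ag PVar PConst PropVar : Type}

/-- `Act_m`, the set of proofs presented at `m` under every history through `m`. -/
def ActM (M : JstitModel Mo Ag PVar PConst PropVar) (m : Mo) : Set (Pol PVar PConst) :=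
  { t | ∀ h ∈ M.toTemporalFrame.H m, t ∈ M.act m h }

/-- The satisfaction relation for jstit models. -/
def Sat (M : JstitModel Mo Ag PVar PConst PropVar) :
    Form Ag PVar PConst PropVar → Mo → Set Mo → Prop
  | Form.pv p, m, h => (m, h) ∈ M.val p
  | Form.and A B, m, h => M.Sat A m h ∧ M.Sat B m h
  | Form.neg A, m, h => ¬ M.Sat A m h
  | Form.stit j A, m, h => ∀ h' C, C ∈ M.choice m j → h ∈ C → h' ∈ C → M.Sat A m h'
  | Form.box A, m, _ => ∀ h' ∈ M.toTemporalFrame.H m, M.Sat A m h'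
  | Form.know A, m, _ => ∀ m' h', M.R m m' → h' ∈ M.toTemporalFrame.H m' → M.Sat A m' h'
  | Form.proves t A, m, _ => A ∈ M.ev m t ∧
      ∀ m' h', M.Re m m' → h' ∈ M.toTemporalFrame.H m' → M.Sat A m' h'
  | Form.ann t, m, h => t ∈ M.act m h

/-- Validity of a formula in a jstit model. -/
def Valid (M : JstitModel Mo Ag PVar PConst PropVar)
    (A : Form Ag PVar PConst PropVar) : Prop :=
  ∀ m h, h ∈ M.toTemporalFrame.H m → M.Sat A m h

end JstitModel

/-- CS-normality of a jstit model. -/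
def CSNormal {Mo Ag PVar PConst PropVar : Type}
    (CS : Set (Form Ag PVar PConst PropVar))
    (M : JstitModel Mo Ag PVar PConst PropVar) : Prop :=
  ∀ (c : PConst) (m : Mo) (A : Form Ag PVar PConst PropVar),
    Form.proves (Pol.const c) A ∈ CS → A ∈ M.ev m (Pol.const c)

/-! If `t` is presented at `m'` on every history, then by "no new proofs guaranteed" it was
already presented at a strictly earlier moment on some history `g` through `m'`. As `m'` is an
immediate successor of `m`, that moment lies below `m`, so expansion puts `t` into `Act(m, g)`.
Both `g` and `h'` pass through `m'`, hence are undivided at `m`, so `Act(m, h') = Act(m, g)`. -/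

namespace TemporalFrame

variable {Mo : Type} (T : TemporalFrame Mo)

/-- No backward branching makes `insert a h` a chain, so maximality gives `a ∈ h`. -/
theorem IsHistory.mem_of_le {T : TemporalFrame Mo} {h : Set Mo} (hh : T.IsHistory h)
    {a b : Mo} (hb : b ∈ h) (hab : T.le a b) : a ∈ h := by
  have hchain : IsChain T.le (insert a h) := by
    refine hh.1.insert fun x hx _ => ?_
    rcases eq_or_ne b x with rfl | hbx
    · exact Or.inl hab
    · rcases hh.1 hb hx hbx with hbx | hxb
      · exact Or.inl (T.le_trans hab hbx)
      · exact T.no_backward b a x hab hxb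
  rw [← hh.2 _ hchain (Set.subset_insert a h)]
  exact Set.mem_insert a h

theorem mem_H_of_le {m m' : Mo} {h : Set Mo} (hmm' : T.le m m') (hh : h ∈ T.H m') :
    h ∈ T.H m :=
  ⟨hh.1, IsHistory.mem_of_le hh.1 hh.2 hmm'⟩

end TemporalFrame

namespace JstitModel

variable {Mo Ag PVar PConst PropVar : Type} (M : JstitModel Mo Ag PVar PConst PropVar)

theorem act_subset_of_le {m₀ m : Mo} {h : Set Mo} (hle : M.le m₀ m)
    (hh : h ∈ M.toTemporalFrame.H m) : M.act m₀ h ⊆ M.act m h := by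
  rcases eq_or_ne m₀ m with rfl | hne
  · exact subset_rfl
  · exact M.expansion m m₀ h ⟨hle, hne⟩ hh

theorem ActM_subset_act_of_next {m m' : Mo} {h' : Set Mo}
    (hnext : M.toTemporalFrame.Next m m') (hh : h' ∈ M.toTemporalFrame.H m) (hm' : m' ∈ h') :
    M.ActM m' ⊆ M.act m h' := by
  intro t ht
  obtain ⟨m₀, g, hm₀m', hg, htg⟩ := M.no_new m' t ht
  have hgm : g ∈ M.toTemporalFrame.H m := M.mem_H_of_le hnext.1.1 hg
  have htm : t ∈ M.act m g := M.act_subset_of_le (hnext.2 m₀ hm₀m') hgm htg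
  rwa [M.divide m g h' hgm hh ⟨m', hnext.1, hg.2, hm'⟩] at htm

end JstitModel

theorem stmt19_general {Mo Ag PVar PConst PropVar : Type}
    (M : JstitModel Mo Ag PVar PConst PropVar)
    (m : Mo) (h' : Set Mo) (hh : h' ∈ M.toTemporalFrame.H m)
    (t : Pol PVar PConst) (ht : t ∉ M.act m h') :
    ∀ m' ∈ h', M.toTemporalFrame.Next m m' → t ∉ M.ActM m' :=
  fun _ hm' hnext htm' => ht (M.ActM_subset_act_of_next hnext hh hm' htm')

/-- Claim 3 in Theorem 5: if `h' ∈ H_m` and `t ∉ Act(m,h')`, then for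
every `m' ∈ h'` with `Next(m,m')` we have `t ∉ Act_{m'}`. -/
theorem stmt19 {Mo Ag PVar PConst PropVar : Type} [Finite Ag]
    [Countable PVar] [Infinite PVar] [Countable PConst] [Infinite PConst]
    [Countable PropVar] [Infinite PropVar]
    (M : JstitModel Mo Ag PVar PConst PropVar)
    (m : Mo) (h' : Set Mo) (hh : h' ∈ M.toTemporalFrame.H m)
    (t : Pol PVar PConst) (ht : t ∉ M.act m h') :
    ∀ m' ∈ h', M.toTemporalFrame.Next m m' → t ∉ M.ActM m' :=
  stmt19_general M m h' hh t ht
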